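/- Let Q be a finite group, G a Q-group, and A an abelian group with trivial G- and Q-actions such that |Q| is invertible in A. Then for every q ≥ 0 the Q-coinvariants of the group homology, H_q(G, A)_Q (which is the E²_{0q}-term of the Hochschild–Serre spectral sequence of the extension 1 → G → G ⋊ Q → Q → 1), is isomorphic to the homology of invariant group chains H_q^Q(G, A). -/

import Mathlib

/-!
Since `|Q|` is invertible in `A`, averaging `x ↦ ∑_{q ∈ Q} q • (x / |Q|)` is a chain map
of the bar complex onto the invariant subcomplex that fixes invariant chains. It induces
a map `Hₙ(G, A) → Hₙ^Q(G, A)` that is constant on `Q`-orbits, hence factors through the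
coinvariants, and is left inverse to the map induced by the inclusion. In the other order,
the composite moves the class of a cycle `z` by `∑_{q ∈ Q} (z / |Q| - q • (z / |Q|))`,
which vanishes in the coinvariants.
-/

open Finsupp

namespace InvariantHomology

noncomputable section

/-- Inhomogeneous `n`-chains of `G` with coefficients in the abelian group `A`
(with trivial action): the free `A`-span of `n`-tuples of elements of `G`. -/
abbrev Ch (G A : Type*) [AddCommGroup A] (n : ℕ) : Type _ := (Fin n → G) →₀ A

/-- The `i`-th inner face of an inhomogeneous `(n+1)`-tuple: multiply the `i`-th and
`(i+1)`-st entries. -/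
def fm {G : Type*} [Group G] {n : ℕ} (g : Fin (n + 1) → G) (i : Fin n) : Fin n → G :=
  fun j =>
    if (j : ℕ) < (i : ℕ) then g j.castSucc
    else if j = i then g i.castSucc * g i.succ
    else g j.succ

variable (G A : Type*) [Group G] [AddCommGroup A]

/-- The differential of the bar complex (with trivial coefficients):
`d[g₁|⋯|g_{n+1}] = [g₂|⋯|g_{n+1}] + ∑ᵢ (-1)ⁱ [g₁|⋯|gᵢgᵢ₊₁|⋯|g_{n+1}] + (-1)^{n+1} [g₁|⋯|gₙ]`. -/
def bd (n : ℕ) : Ch G A (n + 1) →+ Ch G A n :=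
  Finsupp.liftAddHom fun g =>
    (Finsupp.singleAddHom (Fin.tail g) : A →+ Ch G A n)
      + ∑ i : Fin n, ((-1 : ℤ) ^ ((i : ℕ) + 1)) • (Finsupp.singleAddHom (fm g i) : A →+ Ch G A n)
      + ((-1 : ℤ) ^ (n + 1)) • (Finsupp.singleAddHom (Fin.init g) : A →+ Ch G A n)

/-- The differential, re-indexed as a map `Cₙ → C_{n-1}` (zero for `n = 0`). -/
def dd : ∀ n : ℕ, Ch G A n →+ Ch G A (n - 1)
  | 0 => 0
  | n + 1 => bd G A n

/-- Cycles. -/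
def cyc (n : ℕ) : AddSubgroup (Ch G A n) := (dd G A n).ker

/-- Boundaries. -/
def bdry (n : ℕ) : AddSubgroup (Ch G A n) := (bd G A n).range

/-- The group homology `Hₙ(G, A)` with trivial coefficients, computed from the bar complex. -/
def Hn (n : ℕ) : Type _ := cyc G A n ⧸ ((bdry G A n).addSubgroupOf (cyc G A n))

instance (n : ℕ) : AddCommGroup (Hn G A n) :=
  QuotientAddGroup.Quotient.addCommGroup _

variable (Q : Type*) [Group Q] [MulDistribMulAction Q G]

/-- The action of `q : Q` on chains, `q • [g₁|⋯|gₙ] = [q g₁|⋯|q gₙ]`. -/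
def qch (q : Q) (n : ℕ) : Ch G A n →+ Ch G A n :=
  Finsupp.mapDomain.addMonoidHom fun g : Fin n → G => q • g

/-- The subgroup of `Q`-invariant chains. -/
def invCh (n : ℕ) : AddSubgroup (Ch G A n) where
  carrier := { x | ∀ q : Q, qch G A Q q n x = x }
  add_mem' := by intro a b ha hb q; rw [map_add, ha q, hb q]
  zero_mem' := fun q => map_zero _
  neg_mem' := by intro a ha q; rw [map_neg, ha q]

/-- Invariant cycles. -/
def cycQ (n : ℕ) : AddSubgroup (Ch G A n) := cyc G A n ⊓ invCh G A Q n

/-- Boundaries of invariant chains. -/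
def bdryQ (n : ℕ) : AddSubgroup (Ch G A n) := (invCh G A Q (n + 1)).map (bd G A n)

/-- The homology `Hₙ^Q(G, A)` of the subcomplex of `Q`-invariant chains. -/
def HQ (n : ℕ) : Type _ := cycQ G A Q n ⧸ ((bdryQ G A Q n).addSubgroupOf (cycQ G A Q n))

instance (n : ℕ) : AddCommGroup (HQ G A Q n) :=
  QuotientAddGroup.Quotient.addCommGroup _

/-- The natural map `H_*^Q(G, A) → H_*(G, A)` induced by the inclusion of the
invariant subcomplex in the bar complex. -/
def iStar (n : ℕ) : HQ G A Q n →+ Hn G A n :=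
  QuotientAddGroup.map _ _
    (AddSubgroup.inclusion (inf_le_left : cycQ G A Q n ≤ cyc G A n))
    (by
      intro x hx
      rw [AddSubgroup.mem_addSubgroupOf] at hx
      obtain ⟨y, -, hy⟩ := hx
      exact ⟨y, hy⟩)

theorem tail_qsmul (q : Q) {n : ℕ} (g : Fin (n + 1) → G) :
    Fin.tail (q • g) = q • Fin.tail g := rfl

theorem init_qsmul (q : Q) {n : ℕ} (g : Fin (n + 1) → G) :
    Fin.init (q • g) = q • Fin.init g := rfl

theorem fm_qsmul (q : Q) {n : ℕ} (g : Fin (n + 1) → G) (i : Fin n) :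
    fm (q • g) i = q • fm g i := by
  funext j
  simp only [fm, Pi.smul_apply]
  split_ifs <;> simp [smul_mul']

theorem qch_single (q : Q) {n : ℕ} (g : Fin n → G) (a : A) :
    qch G A Q q n (Finsupp.single g a) = Finsupp.single (q • g) a :=
  Finsupp.mapDomain_single

theorem bd_single {n : ℕ} (g : Fin (n + 1) → G) (a : A) :
    bd G A n (Finsupp.single g a) =
      Finsupp.single (Fin.tail g) a
        + ∑ i : Fin n, ((-1 : ℤ) ^ ((i : ℕ) + 1)) • Finsupp.single (fm g i) a
        + ((-1 : ℤ) ^ (n + 1)) • Finsupp.single (Fin.init g) a := by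
  simp [bd, Finsupp.liftAddHom_apply_single]

theorem bd_qch (q : Q) (n : ℕ) :
    (bd G A n).comp (qch G A Q q (n + 1)) = (qch G A Q q n).comp (bd G A n) := by
  refine Finsupp.addHom_ext fun g a => ?_
  simp only [AddMonoidHom.comp_apply, qch_single, bd_single, map_add, map_sum, map_zsmul,
    tail_qsmul, init_qsmul, fm_qsmul]

theorem dd_qch (q : Q) (n : ℕ) :
    (dd G A n).comp (qch G A Q q n) = (qch G A Q q (n - 1)).comp (dd G A n) := by
  cases n with
  | zero => ext g a; simp [dd]
  | succ n => exact bd_qch G A Q q n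

/-- The action of `q : Q` on cycles. -/
def qcyc (q : Q) (n : ℕ) : cyc G A n →+ cyc G A n :=
  ((qch G A Q q n).comp (cyc G A n).subtype).codRestrict _ (by
    intro x
    have hx : dd G A n (x : Ch G A n) = 0 := x.2
    have := congrArg (fun f : Ch G A n →+ Ch G A (n - 1) => f (x : Ch G A n)) (dd_qch G A Q q n)
    simp only [AddMonoidHom.comp_apply] at this
    simp only [AddMonoidHom.comp_apply, AddSubgroup.coe_subtype]
    show qch G A Q q n (x : Ch G A n) ∈ cyc G A n
    have hmem : dd G A n (qch G A Q q n (x : Ch G A n)) = 0 := by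
      rw [this, hx, map_zero]
    exact hmem)

/-- The induced action of `q : Q` on the homology `Hₙ(G, A)`. -/
def qHn (q : Q) (n : ℕ) : Hn G A n →+ Hn G A n :=
  QuotientAddGroup.map _ _ (qcyc G A Q q n) (by
    intro x hx
    rw [AddSubgroup.mem_addSubgroupOf] at hx
    obtain ⟨y, hy⟩ := hx
    rw [AddSubgroup.mem_comap, AddSubgroup.mem_addSubgroupOf]
    refine ⟨qch G A Q q (n + 1) y, ?_⟩
    have := congrArg (fun f : Ch G A (n+1) →+ Ch G A n => f y) (bd_qch G A Q q n)
    simp only [AddMonoidHom.comp_apply] at this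
    show bd G A n (qch G A Q q (n+1) y) = _
    rw [this, hy]
    rfl)

/-- The subgroup of `Q`-invariant homology classes `Hₙ(G, A)^Q`. -/
def HnInv (n : ℕ) : AddSubgroup (Hn G A n) where
  carrier := { x | ∀ q : Q, qHn G A Q q n x = x }
  add_mem' := by intro a b ha hb q; rw [map_add, ha q, hb q]
  zero_mem' := fun q => map_zero _
  neg_mem' := by intro a ha q; rw [map_neg, ha q]

theorem qch_mul (q q' : Q) (n : ℕ) :
    qch G A Q (q * q') n = (qch G A Q q n).comp (qch G A Q q' n) := by
  refine Finsupp.addHom_ext fun g a => ?_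
  simp [qch_single, mul_smul]

theorem qHn_mul (q q' : Q) (n : ℕ) (x : Hn G A n) :
    qHn G A Q q n (qHn G A Q q' n x) = qHn G A Q (q * q') n x := by
  induction x using QuotientAddGroup.induction_on with
  | H z =>
    show QuotientAddGroup.mk (qcyc G A Q q n (qcyc G A Q q' n z))
      = QuotientAddGroup.mk (qcyc G A Q (q * q') n z)
    congr 1
    refine Subtype.ext ?_
    show qch G A Q q n (qch G A Q q' n (z : Ch G A n)) = qch G A Q (q * q') n (z : Ch G A n)
    rw [qch_mul]
    rfl

/-- The subgroup of `Hₙ(G, A)` generated by the elements `y - q • y`. -/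
def coinvRel (n : ℕ) : AddSubgroup (Hn G A n) :=
  AddSubgroup.closure {x | ∃ (q : Q) (y : Hn G A n), x = y - qHn G A Q q n y}

/-- The coinvariants `Hₙ(G, A)_Q` of the `Q`-action on homology. -/
def HnCoinv (n : ℕ) : Type _ := Hn G A n ⧸ coinvRel G A Q n

instance (n : ℕ) : AddCommGroup (HnCoinv G A Q n) :=
  QuotientAddGroup.Quotient.addCommGroup _

/-- The norm map `Hₙ(G, A)_Q → Hₙ(G, A)`, sending the class of `x` to `∑_{q ∈ Q} q • x`. -/
def normHn [Fintype Q] (n : ℕ) : HnCoinv G A Q n →+ Hn G A n :=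
  QuotientAddGroup.lift _ (∑ q : Q, qHn G A Q q n) (by
    rw [coinvRel, AddSubgroup.closure_le]
    rintro x ⟨q', y, rfl⟩
    simp only [SetLike.mem_coe, AddMonoidHom.mem_ker, map_sub, AddMonoidHom.finset_sum_apply]
    rw [sub_eq_zero]
    refine Fintype.sum_equiv (Equiv.mulRight q'⁻¹) _ _ fun q => ?_
    show qHn G A Q q n y = qHn G A Q (q * q'⁻¹) n (qHn G A Q q' n y)
    rw [qHn_mul, inv_mul_cancel_right])

section Norm1

variable (G : Type*) [Group G] (Q : Type*) [Group Q] [MulDistribMulAction Q G] [Fintype Q]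

/-- The `Q`-invariant `1`-chain `∑_{q ∈ Q} [q • g]` associated to `g : G`. -/
def ncyc (g : G) : Ch G ℤ 1 :=
  ∑ q : Q, Finsupp.single (fun _ : Fin 1 => q • g) (1 : ℤ)

theorem ncyc_mem (g : G) : ncyc G Q g ∈ cycQ G ℤ Q 1 := by
  constructor
  · show dd G ℤ 1 (ncyc G Q g) = 0
    show bd G ℤ 0 (ncyc G Q g) = 0
    rw [ncyc, map_sum]
    refine Finset.sum_eq_zero fun q _ => ?_
    rw [bd_single]
    have h : Fin.tail (fun _ : Fin 1 => q • g) = Fin.init (fun _ : Fin 1 => q • g) :=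
      Subsingleton.elim _ _
    simp [h]
  · intro q'
    rw [ncyc, map_sum]
    simp only [qch_single]
    refine Fintype.sum_equiv (Equiv.mulLeft q') _ _ fun q => ?_
    congr 1
    funext _
    show q' • (q • g) = (q' * q) • g
    rw [mul_smul]

/-- The norm map `N : G → H₁^Q(G, ℤ)`, sending `g` to the class of `∑_{q ∈ Q} [q • g]`. -/
def NQ (g : G) : HQ G ℤ Q 1 :=
  QuotientAddGroup.mk ⟨ncyc G Q g, ncyc_mem G Q g⟩

end Norm1

end

section Division

variable {ι A : Type*} [AddCommGroup A] {k : ℤ} (hk : Function.Bijective fun a : A => k • a)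

noncomputable def zsmulInv : (ι →₀ A) →+ (ι →₀ A) :=
  Finsupp.mapRange.addMonoidHom
    (AddEquiv.ofBijective (zsmulAddGroupHom k) hk).symm.toAddMonoidHom

theorem zsmul_zsmulInv (x : ι →₀ A) : k • zsmulInv hk x = x := by
  ext i
  exact (AddEquiv.ofBijective (zsmulAddGroupHom k) hk).apply_symm_apply (x i)

theorem zsmulInv_zsmul (x : ι →₀ A) : zsmulInv hk (k • x) = x := by
  ext i
  exact (AddEquiv.ofBijective (zsmulAddGroupHom k) hk).symm_apply_apply (x i)

theorem map_zsmulInv {κ : Type*} (f : (ι →₀ A) →+ (κ →₀ A)) (x : ι →₀ A) :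
    f (zsmulInv hk x) = zsmulInv hk (f x) := by
  conv_rhs => rw [← zsmul_zsmulInv hk x, map_zsmul, zsmulInv_zsmul]

end Division

section Averaging

variable {G A Q : Type*} [Group G] [AddCommGroup A] [Group Q] [MulDistribMulAction Q G]

theorem qch_apply_qch (q q' : Q) (n : ℕ) (x : Ch G A n) :
    qch G A Q q n (qch G A Q q' n x) = qch G A Q (q * q') n x := by
  rw [qch_mul]; rfl

variable [Fintype Q] (hA : Function.Bijective fun a : A => (Fintype.card Q : ℤ) • a)

noncomputable def average (n : ℕ) : Ch G A n →+ Ch G A n :=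
  ∑ q : Q, (qch G A Q q n).comp (zsmulInv hA)

theorem average_apply (n : ℕ) (x : Ch G A n) :
    average hA n x = ∑ q : Q, qch G A Q q n (zsmulInv hA x) :=
  AddMonoidHom.finsetSum_apply _ _ _

theorem bd_average (n : ℕ) (x : Ch G A (n + 1)) :
    bd G A n (average hA (n + 1) x) = average hA n (bd G A n x) := by
  simp only [average_apply, map_sum, ← map_zsmulInv hA (bd G A n)]
  exact Finset.sum_congr rfl fun q _ => DFunLike.congr_fun (bd_qch G A Q q n) _

theorem average_mem_cyc {n : ℕ} {x : Ch G A n} (hx : x ∈ cyc G A n) :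
    average hA n x ∈ cyc G A n := by
  cases n with
  | zero => exact AddMonoidHom.zero_apply _
  | succ n =>
    change bd G A n _ = 0
    rw [bd_average, show bd G A n x = 0 from hx, map_zero]

theorem average_mem_invCh (n : ℕ) (x : Ch G A n) : average hA n x ∈ invCh G A Q n := by
  intro q'
  rw [average_apply, map_sum]
  simp only [qch_apply_qch]
  exact Fintype.sum_equiv (Equiv.mulLeft q') _ _ fun _ => rfl

theorem average_qch (q' : Q) (n : ℕ) (x : Ch G A n) :
    average hA n (qch G A Q q' n x) = average hA n x := by
  simp only [average_apply, ← map_zsmulInv hA (qch G A Q q' n), qch_apply_qch]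
  exact Fintype.sum_equiv (Equiv.mulRight q') _ _ fun _ => rfl

theorem average_of_mem_invCh {n : ℕ} {x : Ch G A n} (hx : x ∈ invCh G A Q n) :
    average hA n x = x := by
  simp only [average_apply, map_zsmulInv hA (qch G A Q _ n), hx _, Finset.sum_const,
    Finset.card_univ, ← natCast_zsmul, zsmul_zsmulInv]

theorem sub_average_eq_sum (n : ℕ) (x : Ch G A n) :
    x - average hA n x = ∑ q : Q, (zsmulInv hA x - qch G A Q q n (zsmulInv hA x)) := by
  rw [Finset.sum_sub_distrib, ← average_apply, Finset.sum_const, Finset.card_univ,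
    ← natCast_zsmul, zsmul_zsmulInv]

noncomputable def averageHQ (n : ℕ) : Hn G A n →+ HQ G A Q n :=
  QuotientAddGroup.map _ _
    (((average hA n).comp (cyc G A n).subtype).codRestrict (cycQ G A Q n)
      fun z => ⟨average_mem_cyc hA z.2, average_mem_invCh hA n (z : Ch G A n)⟩)
    (by
      rintro z ⟨y, hy⟩
      refine ⟨average hA (n + 1) y, average_mem_invCh hA _ y, ?_⟩
      simp only [bd_average, hy]
      rfl)

theorem averageHQ_qHn (q : Q) (n : ℕ) (y : Hn G A n) :
    averageHQ hA n (qHn G A Q q n y) = averageHQ hA n y := by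
  induction y using QuotientAddGroup.induction_on with
  | H z => exact congrArg QuotientAddGroup.mk (Subtype.ext (average_qch hA q n (z : Ch G A n)))

theorem coinvRel_le_ker_averageHQ (n : ℕ) : coinvRel G A Q n ≤ (averageHQ hA n).ker := by
  rw [coinvRel, AddSubgroup.closure_le]
  rintro _ ⟨q, y, rfl⟩
  rw [SetLike.mem_coe, AddMonoidHom.mem_ker, map_sub, averageHQ_qHn, sub_self]

theorem averageHQ_iStar (n : ℕ) (x : HQ G A Q n) : averageHQ hA n (iStar G A Q n x) = x := by
  induction x using QuotientAddGroup.induction_on with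
  | H z => exact congrArg QuotientAddGroup.mk (Subtype.ext (average_of_mem_invCh hA z.2.2))

theorem sub_iStar_averageHQ_mem_coinvRel (n : ℕ) (y : Hn G A n) :
    y - iStar G A Q n (averageHQ hA n y) ∈ coinvRel G A Q n := by
  induction y using QuotientAddGroup.induction_on with
  | H z =>
    have hw : zsmulInv hA (z : Ch G A n) ∈ cyc G A n := by
      change dd G A n _ = 0
      rw [map_zsmulInv, show dd G A n z = 0 from z.2, map_zero]
    let w : cyc G A n := ⟨_, hw⟩
    have hsub :
        z - ⟨average hA n z, average_mem_cyc hA z.2⟩ = ∑ q : Q, (w - qcyc G A Q q n w) :=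
      Subtype.ext <| by
        simp only [AddSubgroup.coe_sub, AddSubmonoidClass.coe_finsetSum]
        exact sub_average_eq_sum hA n (z : Ch G A n)
    convert AddSubgroup.sum_mem (coinvRel G A Q n) fun q _ =>
      AddSubgroup.subset_closure ⟨q, QuotientAddGroup.mk w, rfl⟩ using 1
    have key := congrArg (QuotientAddGroup.mk' ((bdry G A n).addSubgroupOf (cyc G A n))) hsub
    simp only [map_sub, map_sum] at key
    exact key

end Averaging

end InvariantHomology

open InvariantHomology in
/-- If `|Q|` is invertible in `A`, the coinvariants `H_q(G, A)_Q`
(the `E²₀q` term of the Hochschild–Serre spectral sequence of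
`1 → G → G ⋊ Q → Q → 1`) are isomorphic to `H_q^Q(G, A)`. -/
theorem coinvariants_iso_invariant_homology
    (G A Q : Type*) [Group G] [AddCommGroup A] [Group Q] [MulDistribMulAction Q G] [Fintype Q]
    (hA : Function.Bijective fun a : A => (Fintype.card Q : ℤ) • a) (q : ℕ) :
    Nonempty (HnCoinv G A Q q ≃+ HQ G A Q q) := by
  let toHQ : HnCoinv G A Q q →+ HQ G A Q q :=
    QuotientAddGroup.lift _ (averageHQ hA q) (coinvRel_le_ker_averageHQ hA q)
  let ofHQ : HQ G A Q q →+ HnCoinv G A Q q :=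
    (QuotientAddGroup.mk' (coinvRel G A Q q)).comp (iStar G A Q q)
  refine ⟨AddEquiv.ofBijective toHQ (Function.bijective_iff_has_inverse.mpr ⟨ofHQ, ?_, ?_⟩)⟩
  · intro y
    induction y using QuotientAddGroup.induction_on with
    | H z => exact (QuotientAddGroup.eq_iff_sub_mem.mpr
        (sub_iStar_averageHQ_mem_coinvRel hA q z)).symm
  · exact averageHQ_iStar hA q
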